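/- Strong continuity on C_rub: if v : ℝ^d → ℂ is bounded and uniformly continuous and satisfies lim_{τ→0} sup_{x∈ℝ^d} |v(e^{τS}x) − v(x)| = 0, then lim_{t→0⁺} sup_{x∈ℝ^d} |[T(t)v](x) − v(x)| = 0. -/

import Mathlib

/-!
Substituting `ξ = e^{tS}x + y` turns `T(t)v(x) - v(x)` into
`∫ K_t(y) (v(e^{tS}x + y) - v(e^{tS}x)) dy + (e^{-δt} - 1) v(e^{tS}x) + (v(e^{tS}x) - v(x))`,
where `K_t(y) = (4παt)^{-d/2} e^{-δt - |y|²/(4αt)}` has integral `e^{-δt}`. Since `|K_t|` is a real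
Gaussian of variance `∼ t` whose total mass `(|α| / Re α)^{d/2} e^{-t Re δ}` stays bounded, its mass
outside any ball tends to `0`, so `K_t` is an approximate identity and the first term tends to `0`
uniformly in `x` for bounded uniformly continuous `v`. The second term is small because `v` is
bounded, the third by the hypothesis on the rotations.
-/

open MeasureTheory

/-- Rotation `e^{tS}x` given by the matrix exponential. -/
noncomputable def ouRot (d : ℕ) (S : Matrix (Fin d) (Fin d) ℝ) (t : ℝ)
    (x : EuclideanSpace ℝ (Fin d)) : EuclideanSpace ℝ (Fin d) :=
  WithLp.toLp 2 (Matrix.mulVec (NormedSpace.exp (t • S)) (WithLp.ofLp x))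

/-- The scalar complex Ornstein--Uhlenbeck kernel. -/
noncomputable def ouH (d : ℕ) (α δ : ℂ) (S : Matrix (Fin d) (Fin d) ℝ)
    (x ξ : EuclideanSpace ℝ (Fin d)) (t : ℝ) : ℂ :=
  (4 * (Real.pi : ℂ) * α * t) ^ (-(d : ℂ) / 2) *
    Complex.exp (-(δ * t) - ((‖ouRot d S t x - ξ‖ ^ 2 : ℝ) : ℂ) / (4 * α * t))

/-- The Ornstein--Uhlenbeck semigroup `[T(t)v](x) = ∫ H(x,ξ,t) v(ξ) dξ` for `t > 0`,
and `T(0)v = v`. -/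
noncomputable def ouT (d : ℕ) (α δ : ℂ) (S : Matrix (Fin d) (Fin d) ℝ) (t : ℝ)
    (v : EuclideanSpace ℝ (Fin d) → ℂ) (x : EuclideanSpace ℝ (Fin d)) : ℂ :=
  if t = 0 then v x else ∫ ξ : EuclideanSpace ℝ (Fin d), ouH d α δ S x ξ t * v ξ

open Filter Topology Set

section UniformSup

variable {ι X G : Type*} {l : Filter ι} [SeminormedAddCommGroup G]

theorem TendstoUniformly.comp_indexed {β γ : Type*} [UniformSpace β] {F : ι → X → β} {c : β}
    (h : TendstoUniformly F (fun _ => c) l) (g : ι → γ → X) :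
    TendstoUniformly (fun i y => F i (g i y)) (fun _ => c) l :=
  fun u hu => (h u hu).mono fun _ hi _ => hi _

theorem TendstoUniformly.tendsto_iSup_norm {F : ι → X → G} (h : TendstoUniformly F 0 l) :
    Tendsto (fun i => ⨆ x, ‖F i x‖) l (𝓝 0) := by
  rw [Metric.tendsto_nhds]
  intro ε hε
  filter_upwards [Metric.tendstoUniformly_iff.mp h (ε / 2) (half_pos hε)] with i hi
  rw [Real.dist_0_eq_abs, abs_of_nonneg (Real.iSup_nonneg fun _ => norm_nonneg _)]
  refine (Real.iSup_le (fun x => ?_) (half_pos hε).le).trans_lt (half_lt_self hε)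
  simpa using (hi x).le

theorem tendstoUniformly_zero_of_tendsto_iSup_norm {F : ι → X → G}
    (hF : ∀ i, BddAbove (range fun x => ‖F i x‖)) (h : Tendsto (fun i => ⨆ x, ‖F i x‖) l (𝓝 0)) :
    TendstoUniformly F 0 l := by
  rw [Metric.tendstoUniformly_iff]
  intro ε hε
  filter_upwards [h.eventually_lt_const hε] with i hi x
  rw [Pi.zero_apply, dist_zero_left]
  exact (le_ciSup (hF i) x).trans_lt hi

theorem tendstoUniformly_smul_of_tendsto_zero {𝕜 : Type*} [NormedField 𝕜] [NormedSpace 𝕜 G]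
    {c : ι → 𝕜} (hc : Tendsto c l (𝓝 0)) {v : X → G} (hv : ∃ C, ∀ x, ‖v x‖ ≤ C) :
    TendstoUniformly (fun i x => c i • v x) 0 l := by
  obtain ⟨C, hC⟩ := hv
  rw [Metric.tendstoUniformly_iff]
  intro ε hε
  have hcC : Tendsto (fun i => ‖c i‖ * C) l (𝓝 0) := by simpa using hc.norm.mul_const C
  filter_upwards [hcC.eventually_lt_const hε] with i hi x
  rw [Pi.zero_apply, dist_zero_left, norm_smul]
  exact (mul_le_mul_of_nonneg_left (hC x) (norm_nonneg _)).trans_lt hi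

end UniformSup

section ApproximateIdentity

variable {E F : Type*} [NormedAddCommGroup E] [MeasurableSpace E] [OpensMeasurableSpace E]
  {μ : Measure E} [NormedAddCommGroup F] [NormedSpace ℝ F] [NormedSpace ℂ F]

theorem norm_integral_smul_sub_le {k : E → ℂ} (hk : Integrable k μ) {v : E → F} {C ε r : ℝ}
    (hC : ∀ x, ‖v x‖ ≤ C) (hε : 0 ≤ ε) (hvε : ∀ a b, dist a b < r → ‖v a - v b‖ ≤ ε) (R : E) :
    ‖∫ y, k y • (v (R + y) - v R) ∂μ‖ ≤
      ε * ∫ y, ‖k y‖ ∂μ + 2 * C * ∫ y in {y | r ≤ ‖y‖}, ‖k y‖ ∂μ := by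
  have hs : MeasurableSet {y : E | r ≤ ‖y‖} := measurableSet_le measurable_const measurable_norm
  have hfar : Integrable (fun y => {y | r ≤ ‖y‖}.indicator (fun y => ‖k y‖) y) μ :=
    hk.norm.indicator hs
  calc ‖∫ y, k y • (v (R + y) - v R) ∂μ‖
      ≤ ∫ y, ε * ‖k y‖ + 2 * C * {y | r ≤ ‖y‖}.indicator (fun y => ‖k y‖) y ∂μ := by
        refine norm_integral_le_of_norm_le ((hk.norm.const_mul ε).add (hfar.const_mul _))
          (.of_forall fun y => ?_)
        rw [norm_smul]
        by_cases hy : r ≤ ‖y‖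
        · have hdiff : ‖v (R + y) - v R‖ ≤ 2 * C :=
            (norm_sub_le _ _).trans (by linarith [hC (R + y), hC R])
          rw [indicator_of_mem (show y ∈ {y | r ≤ ‖y‖} from hy)]
          nlinarith [norm_nonneg (k y)]
        · have hdiff : ‖v (R + y) - v R‖ ≤ ε := hvε _ _ (by simpa [dist_eq_norm] using hy)
          rw [indicator_of_notMem (show y ∉ {y | r ≤ ‖y‖} from hy)]
          nlinarith [norm_nonneg (k y)]
    _ = _ := by
        rw [integral_add (hk.norm.const_mul ε) (hfar.const_mul _), integral_const_mul,
          integral_const_mul, integral_indicator hs]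

theorem tendstoUniformly_integral_smul_sub {ι : Type*} {l : Filter ι} {k : ι → E → ℂ}
    (hk : ∀ᶠ i in l, Integrable (k i) μ)
    (hmass : IsBoundedUnder (· ≤ ·) l fun i => ∫ y, ‖k i y‖ ∂μ)
    (htail : ∀ r > 0, Tendsto (fun i => ∫ y in {y | r ≤ ‖y‖}, ‖k i y‖ ∂μ) l (𝓝 0))
    {v : E → F} (hvb : ∃ C, ∀ x, ‖v x‖ ≤ C) (hvu : UniformContinuous v) :
    TendstoUniformly (fun i R => ∫ y, k i y • (v (R + y) - v R) ∂μ) 0 l := by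
  obtain ⟨C, hC⟩ := hvb
  obtain ⟨M, hM⟩ := hmass
  rw [Metric.tendstoUniformly_iff]
  intro ε hε
  obtain ⟨ε₀, hε₀, hε₀M⟩ := exists_pos_mul_lt (half_pos hε) M
  obtain ⟨r, hr, hvr⟩ := Metric.uniformContinuous_iff.mp hvu ε₀ hε₀
  have hfar : ∀ᶠ i in l, 2 * C * ∫ y in {y | r ≤ ‖y‖}, ‖k i y‖ ∂μ < ε / 2 := by
    have h2C := (htail r hr).const_mul (2 * C)
    rw [mul_zero] at h2C
    exact h2C.eventually_lt_const (half_pos hε)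
  filter_upwards [hk, hM, hfar] with i hki hMi hfari R
  rw [Pi.zero_apply, dist_zero_left]
  calc _ ≤ ε₀ * ∫ y, ‖k i y‖ ∂μ + 2 * C * ∫ y in {y | r ≤ ‖y‖}, ‖k i y‖ ∂μ :=
        norm_integral_smul_sub_le hki hC hε₀.le (fun a b h => (dist_eq_norm (v a) _ ▸ hvr h).le) R
    _ < ε := by linarith [mul_le_mul_of_nonneg_left hMi hε₀.le]

theorem integral_smul_sub_eq [SecondCountableTopology E] [CompleteSpace F] {k : E → ℂ}
    (hk : Integrable k μ) {v : E → F} (hv : Continuous v) (hvb : ∃ C, ∀ x, ‖v x‖ ≤ C) (R : E) :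
    ∫ y, k y • (v (R + y) - v R) ∂μ = ∫ y, k y • v (R + y) ∂μ - (∫ y, k y ∂μ) • v R := by
  obtain ⟨C, hC⟩ := hvb
  have hvR : Integrable (fun y => k y • v (R + y)) μ :=
    hk.smul_bdd C (hv.comp (continuous_const_add R)).aestronglyMeasurable (.of_forall fun y => hC _)
  simp_rw [smul_sub]
  rw [integral_sub hvR (hk.smul_const _), integral_smul_const]

end ApproximateIdentity

section Gaussian

variable {V : Type*} [NormedAddCommGroup V] [InnerProductSpace ℝ V] [FiniteDimensional ℝ V]
  [MeasurableSpace V] [BorelSpace V]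

theorem integrable_rexp_neg_mul_sq_norm {b : ℝ} (hb : 0 < b) :
    Integrable (fun y : V => Real.exp (-b * ‖y‖ ^ 2)) := by
  refine (GaussianFourier.integrable_cexp_neg_mul_sq_norm_add (V := V) (b := b)
    (by simpa using hb) 0 0).norm.congr (.of_forall fun y => ?_)
  simp [Complex.norm_exp, ← Complex.ofReal_pow]

theorem setIntegral_rexp_neg_mul_sq_norm_le {b r : ℝ} (hb : 0 < b) (hr : 0 ≤ r) :
    ∫ y in {y : V | r ≤ ‖y‖}, Real.exp (-b * ‖y‖ ^ 2) ≤
      2 ^ ((Module.finrank ℝ V : ℝ) / 2) * Real.exp (-(b * r ^ 2 / 2)) *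
        ∫ y : V, Real.exp (-b * ‖y‖ ^ 2) := by
  have hb2 : 0 < b / 2 := half_pos hb
  have hdom := (integrable_rexp_neg_mul_sq_norm (V := V) hb2).const_mul
    (Real.exp (-(b * r ^ 2 / 2)))
  calc ∫ y in {y : V | r ≤ ‖y‖}, Real.exp (-b * ‖y‖ ^ 2)
      ≤ ∫ y in {y : V | r ≤ ‖y‖}, Real.exp (-(b * r ^ 2 / 2)) * Real.exp (-(b / 2) * ‖y‖ ^ 2) := by
        refine setIntegral_mono_on (integrable_rexp_neg_mul_sq_norm hb).integrableOn
          hdom.integrableOn (measurableSet_le measurable_const measurable_norm) fun y hy => ?_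
        rw [← Real.exp_add, Real.exp_le_exp]
        nlinarith [mul_le_mul_of_nonneg_left (pow_le_pow_left₀ hr (show r ≤ ‖y‖ from hy) 2) hb.le]
    _ ≤ ∫ y : V, Real.exp (-(b * r ^ 2 / 2)) * Real.exp (-(b / 2) * ‖y‖ ^ 2) :=
        setIntegral_le_integral hdom (.of_forall fun _ => by positivity)
    _ = _ := by
        rw [integral_const_mul, GaussianFourier.integral_rexp_neg_mul_sq_norm hb2,
          GaussianFourier.integral_rexp_neg_mul_sq_norm hb,
          show Real.pi / (b / 2) = 2 * (Real.pi / b) by field_simp,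
          Real.mul_rpow (by norm_num) (by positivity)]
        ring

end Gaussian

section ComplexHeatKernel

variable {d : ℕ} {α δ : ℂ} {t : ℝ}

noncomputable def complexHeatKernel (d : ℕ) (α δ : ℂ) (t : ℝ) (y : EuclideanSpace ℝ (Fin d)) :
    ℂ :=
  (4 * (Real.pi : ℂ) * α * t) ^ (-(d : ℂ) / 2) *
    Complex.exp (-(δ * t) - ((‖y‖ ^ 2 : ℝ) : ℂ) / (4 * α * t))

theorem ouH_eq_complexHeatKernel (S : Matrix (Fin d) (Fin d) ℝ) (x ξ : EuclideanSpace ℝ (Fin d)) :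
    ouH d α δ S x ξ t = complexHeatKernel d α δ t (ξ - ouRot d S t x) := by
  rw [ouH, complexHeatKernel, norm_sub_rev]

theorem ouT_eq_integral_complexHeatKernel (S : Matrix (Fin d) (Fin d) ℝ) (ht : t ≠ 0)
    (v : EuclideanSpace ℝ (Fin d) → ℂ) (x : EuclideanSpace ℝ (Fin d)) :
    ouT d α δ S t v x = ∫ y, complexHeatKernel d α δ t y * v (ouRot d S t x + y) := by
  rw [ouT, if_neg ht, ← integral_add_left_eq_self _ (ouRot d S t x)]
  simp_rw [ouH_eq_complexHeatKernel, add_sub_cancel_left]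

theorem complexHeatKernel_eq_mul (y : EuclideanSpace ℝ (Fin d)) :
    complexHeatKernel d α δ t y =
      complexHeatKernel d α δ t 0 * Complex.exp (-(4 * α * t)⁻¹ * (‖y‖ : ℂ) ^ 2) := by
  simp only [complexHeatKernel, norm_zero, mul_assoc, ← Complex.exp_add]
  push_cast
  ring_nf

theorem norm_complexHeatKernel (y : EuclideanSpace ℝ (Fin d)) :
    ‖complexHeatKernel d α δ t y‖ =
      ‖complexHeatKernel d α δ t 0‖ * Real.exp (-((4 * α * t)⁻¹).re * ‖y‖ ^ 2) := by
  rw [complexHeatKernel_eq_mul, norm_mul, Complex.norm_exp]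
  congr 2
  simp [← Complex.ofReal_pow]

theorem re_inv_four_mul_pos (hα : 0 < α.re) (ht : 0 < t) : 0 < ((4 * α * t)⁻¹).re := by
  rw [Complex.inv_re]
  refine div_pos (by simp; positivity) (Complex.normSq_pos.mpr ?_)
  exact mul_ne_zero (mul_ne_zero (by norm_num) (Complex.ne_zero_of_re_pos hα))
    (Complex.ofReal_ne_zero.mpr ht.ne')

theorem integrable_complexHeatKernel (hα : 0 < α.re) (ht : 0 < t) :
    Integrable (complexHeatKernel d α δ t) := by
  rw [show complexHeatKernel d α δ t = _ from funext complexHeatKernel_eq_mul]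
  exact (GaussianFourier.integrable_cexp_neg_mul_sq_norm_add (re_inv_four_mul_pos hα ht) 0 0
    |>.congr (.of_forall fun y => by simp)).const_mul _

theorem integral_complexHeatKernel (hα : 0 < α.re) (ht : 0 < t) :
    ∫ y, complexHeatKernel d α δ t y = Complex.exp (-(δ * t)) := by
  have hbase : 4 * (Real.pi : ℂ) * α * t ≠ 0 := by
    simp [Complex.ne_zero_of_re_pos hα, ht.ne', Real.pi_ne_zero]
  rw [show complexHeatKernel d α δ t = _ from funext complexHeatKernel_eq_mul, integral_const_mul,
    GaussianFourier.integral_cexp_neg_mul_sq_norm (re_inv_four_mul_pos hα ht),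
    finrank_euclideanSpace_fin, div_inv_eq_mul,
    show (Real.pi : ℂ) * (4 * α * t) = 4 * Real.pi * α * t by ring, complexHeatKernel,
    mul_right_comm, ← Complex.cpow_add _ _ hbase, neg_div, neg_add_cancel,
    Complex.cpow_zero]
  simp

theorem norm_complexHeatKernel_zero :
    ‖complexHeatKernel d α δ t 0‖ =
      ‖4 * (Real.pi : ℂ) * α * t‖ ^ (-(d : ℝ) / 2) * Real.exp (-(δ.re * t)) := by
  rw [complexHeatKernel, norm_mul, show -(d : ℂ) / 2 = ((-(d : ℝ) / 2 : ℝ) : ℂ) by push_cast; ring,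
    Complex.norm_cpow_real, Complex.norm_exp]
  simp

theorem integral_norm_complexHeatKernel (hα : 0 < α.re) (ht : 0 < t) :
    ∫ y, ‖complexHeatKernel d α δ t y‖ = (‖α‖ / α.re) ^ ((d : ℝ) / 2) * Real.exp (-(δ.re * t)) := by
  rw [show (fun y => ‖complexHeatKernel d α δ t y‖) = _ from funext norm_complexHeatKernel,
    integral_const_mul, GaussianFourier.integral_rexp_neg_mul_sq_norm (re_inv_four_mul_pos hα ht),
    finrank_euclideanSpace_fin]
  have hα0 : 0 < ‖α‖ := norm_pos_iff.mpr (Complex.ne_zero_of_re_pos hα)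
  have hnorm : ‖4 * (Real.pi : ℂ) * α * t‖ = 4 * Real.pi * ‖α‖ * t := by
    simp [abs_of_pos ht, abs_of_pos Real.pi_pos]
  have hratio : Real.pi / ((4 * α * t)⁻¹).re = ‖α‖ / α.re * ‖4 * (Real.pi : ℂ) * α * t‖ := by
    rw [hnorm, Complex.inv_re, Complex.normSq_eq_norm_sq]
    simp only [Complex.mul_re, Complex.re_ofNat, Complex.im_ofNat, zero_mul, sub_zero,
      Complex.ofReal_re, Complex.mul_im, add_zero, Complex.ofReal_im, mul_zero, Complex.norm_mul,
      Complex.norm_ofNat, Complex.norm_real, Real.norm_eq_abs, abs_of_pos ht]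
    field_simp
  rw [norm_complexHeatKernel_zero, hratio, Real.mul_rpow (by positivity) (norm_nonneg _), neg_div,
    Real.rpow_neg (norm_nonneg _)]
  have : 0 < ‖4 * (Real.pi : ℂ) * α * t‖ ^ ((d : ℝ) / 2) := by
    rw [hnorm]; positivity
  field_simp

theorem tendsto_integral_norm_complexHeatKernel (hα : 0 < α.re) :
    Tendsto (fun t => ∫ y, ‖complexHeatKernel d α δ t y‖) (𝓝[>] 0)
      (𝓝 ((‖α‖ / α.re) ^ ((d : ℝ) / 2))) := by
  have hcont : Continuous fun t : ℝ => (‖α‖ / α.re) ^ ((d : ℝ) / 2) * Real.exp (-(δ.re * t)) := by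
    fun_prop
  have hlim : Tendsto (fun t : ℝ => (‖α‖ / α.re) ^ ((d : ℝ) / 2) * Real.exp (-(δ.re * t))) (𝓝 0)
      (𝓝 ((‖α‖ / α.re) ^ ((d : ℝ) / 2))) := by
    simpa using hcont.tendsto 0
  refine (hlim.mono_left nhdsWithin_le_nhds).congr' ?_
  filter_upwards [self_mem_nhdsWithin] with t ht
  exact (integral_norm_complexHeatKernel hα ht).symm

theorem setIntegral_norm_complexHeatKernel_le {r : ℝ} (hα : 0 < α.re) (ht : 0 < t) (hr : 0 ≤ r) :
    ∫ y in {y | r ≤ ‖y‖}, ‖complexHeatKernel d α δ t y‖ ≤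
      2 ^ ((d : ℝ) / 2) * Real.exp (-(((4 * α * t)⁻¹).re * r ^ 2 / 2)) *
        ∫ y, ‖complexHeatKernel d α δ t y‖ := by
  have hgauss := setIntegral_rexp_neg_mul_sq_norm_le (V := EuclideanSpace ℝ (Fin d))
    (re_inv_four_mul_pos hα ht) hr
  rw [finrank_euclideanSpace_fin] at hgauss
  rw [show (fun y => ‖complexHeatKernel d α δ t y‖) = _ from funext norm_complexHeatKernel,
    integral_const_mul, integral_const_mul]
  calc _ ≤ ‖complexHeatKernel d α δ t 0‖ * (2 ^ ((d : ℝ) / 2) *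
        Real.exp (-(((4 * α * t)⁻¹).re * r ^ 2 / 2)) *
          ∫ y : EuclideanSpace ℝ (Fin d), Real.exp (-((4 * α * t)⁻¹).re * ‖y‖ ^ 2)) :=
        mul_le_mul_of_nonneg_left hgauss (norm_nonneg _)
    _ = _ := by ring

theorem tendsto_setIntegral_norm_complexHeatKernel (hα : 0 < α.re) {r : ℝ} (hr : 0 < r) :
    Tendsto (fun t => ∫ y in {y | r ≤ ‖y‖}, ‖complexHeatKernel d α δ t y‖) (𝓝[>] 0) (𝓝 0) := by
  have hinv : Tendsto (fun t : ℝ => ((4 * α * t)⁻¹).re) (𝓝[>] 0) atTop := by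
    have hc : 0 < ((4 * α)⁻¹).re := by simpa using re_inv_four_mul_pos hα one_pos
    refine (tendsto_inv_nhdsGT_zero.const_mul_atTop hc).congr fun t => ?_
    rw [mul_inv (4 * α), ← Complex.ofReal_inv, Complex.re_mul_ofReal]
  have hexp : Tendsto (fun t : ℝ => Real.exp (-(((4 * α * t)⁻¹).re * r ^ 2 / 2))) (𝓝[>] 0)
      (𝓝 0) :=
    Real.tendsto_exp_neg_atTop_nhds_zero.comp
      ((hinv.atTop_mul_const (pow_pos hr 2)).atTop_div_const two_pos)
  have hbound := (hexp.const_mul (2 ^ ((d : ℝ) / 2))).mul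
    (tendsto_integral_norm_complexHeatKernel (d := d) (δ := δ) hα)
  rw [mul_zero, zero_mul] at hbound
  refine tendsto_of_tendsto_of_tendsto_of_le_of_le' tendsto_const_nhds hbound
    (.of_forall fun t => setIntegral_nonneg (measurableSet_le measurable_const measurable_norm)
      fun _ _ => norm_nonneg _) ?_
  filter_upwards [self_mem_nhdsWithin] with t ht
  exact setIntegral_norm_complexHeatKernel_le hα ht hr.le

theorem ouT_sub_eq (S : Matrix (Fin d) (Fin d) ℝ) (hα : 0 < α.re) (ht : 0 < t)
    {v : EuclideanSpace ℝ (Fin d) → ℂ} (hv : Continuous v) (hvb : ∃ C, ∀ x, ‖v x‖ ≤ C)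
    (x : EuclideanSpace ℝ (Fin d)) :
    ouT d α δ S t v x - v x =
      (∫ y, complexHeatKernel d α δ t y * (v (ouRot d S t x + y) - v (ouRot d S t x))) +
        (Complex.exp (-(δ * t)) - 1) * v (ouRot d S t x) + (v (ouRot d S t x) - v x) := by
  set R := ouRot d S t x
  have hsplit : ∫ y, complexHeatKernel d α δ t y * (v (R + y) - v R) =
      (∫ y, complexHeatKernel d α δ t y * v (R + y)) - (∫ y, complexHeatKernel d α δ t y) * v R :=
    integral_smul_sub_eq (integrable_complexHeatKernel hα ht) hv hvb R
  rw [hsplit, integral_complexHeatKernel hα ht, ouT_eq_integral_complexHeatKernel S ht.ne']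
  ring

theorem tendstoUniformly_ouT_sub (S : Matrix (Fin d) (Fin d) ℝ) (hα : 0 < α.re)
    {v : EuclideanSpace ℝ (Fin d) → ℂ} (hvb : ∃ C, ∀ x, ‖v x‖ ≤ C)
    (hvu : UniformContinuous v)
    (hrot : TendstoUniformly (fun t x => v (ouRot d S t x) - v x) 0 (𝓝[>] 0)) :
    TendstoUniformly (fun t x => ouT d α δ S t v x - v x) 0 (𝓝[>] 0) := by
  have hconv : TendstoUniformly (fun (t : ℝ) x => ∫ y, complexHeatKernel d α δ t y *
      (v (ouRot d S t x + y) - v (ouRot d S t x))) 0 (𝓝[>] 0) :=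
    (tendstoUniformly_integral_smul_sub
      (eventually_nhdsWithin_of_forall fun t ht => integrable_complexHeatKernel hα ht)
      (tendsto_integral_norm_complexHeatKernel hα).isBoundedUnder_le
      (fun r hr => tendsto_setIntegral_norm_complexHeatKernel hα hr) hvb hvu).comp_indexed
      (ouRot d S)
  have hexp : Tendsto (fun t : ℝ => Complex.exp (-(δ * t)) - 1) (𝓝[>] 0) (𝓝 0) := by
    have : Continuous fun t : ℝ => Complex.exp (-(δ * t)) - 1 := by fun_prop
    simpa using (this.tendsto 0).mono_left nhdsWithin_le_nhds
  have hdamp : TendstoUniformly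
      (fun (t : ℝ) x => (Complex.exp (-(δ * t)) - 1) * v (ouRot d S t x)) 0 (𝓝[>] 0) :=
    (tendstoUniformly_smul_of_tendsto_zero hexp hvb).comp_indexed (ouRot d S)
  have hsum := (hconv.add hdamp).add hrot
  rw [add_zero, add_zero] at hsum
  refine (tendstoUniformly_congr ?_).mp hsum
  filter_upwards [self_mem_nhdsWithin] with t ht
  funext x
  simp only [Pi.add_apply]
  exact (ouT_sub_eq S hα ht hvu.continuous hvb x).symm

end ComplexHeatKernel

theorem ouSemigroup_strong_continuity_Crub_general
    (d : ℕ) (α δ : ℂ) (hα : 0 < α.re)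
    (S : Matrix (Fin d) (Fin d) ℝ)
    (v : EuclideanSpace ℝ (Fin d) → ℂ)
    (hvb : ∃ C : ℝ, ∀ x, ‖v x‖ ≤ C)
    (hvu : UniformContinuous v)
    (hvrot : Filter.Tendsto
      (fun τ : ℝ => ⨆ x : EuclideanSpace ℝ (Fin d), ‖v (ouRot d S τ x) - v x‖)
      (nhds 0) (nhds 0)) :
    Filter.Tendsto
      (fun t : ℝ => ⨆ x : EuclideanSpace ℝ (Fin d), ‖ouT d α δ S t v x - v x‖)
      (nhdsWithin 0 (Set.Ioi 0)) (nhds 0) := by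
  obtain ⟨C, hC⟩ := hvb
  have hrot : TendstoUniformly (fun t x => v (ouRot d S t x) - v x) 0 (𝓝[>] 0) := by
    refine tendstoUniformly_zero_of_tendsto_iSup_norm (fun t => ⟨C + C, ?_⟩)
      (hvrot.mono_left nhdsWithin_le_nhds)
    rintro _ ⟨x, rfl⟩
    exact (norm_sub_le _ _).trans (add_le_add (hC _) (hC x))
  exact (tendstoUniformly_ouT_sub S hα ⟨C, hC⟩ hvu hrot).tendsto_iSup_norm

/-- strong continuity of the Ornstein--Uhlenbeck semigroup on `C_rub`:
`sup_x |[T(t)v](x) - v(x)| → 0` as `t → 0⁺`. -/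
theorem ouSemigroup_strong_continuity_Crub
    (d : ℕ) (hd : 1 ≤ d) (α δ : ℂ) (hα : 0 < α.re)
    (S : Matrix (Fin d) (Fin d) ℝ) (hS : S.transpose = -S)
    (v : EuclideanSpace ℝ (Fin d) → ℂ)
    (hvb : ∃ C : ℝ, ∀ x, ‖v x‖ ≤ C)
    (hvu : UniformContinuous v)
    (hvrot : Filter.Tendsto
      (fun τ : ℝ => ⨆ x : EuclideanSpace ℝ (Fin d), ‖v (ouRot d S τ x) - v x‖)
      (nhds 0) (nhds 0)) :
    Filter.Tendsto
      (fun t : ℝ => ⨆ x : EuclideanSpace ℝ (Fin d), ‖ouT d α δ S t v x - v x‖)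
      (nhdsWithin 0 (Set.Ioi 0)) (nhds 0) :=
  ouSemigroup_strong_continuity_Crub_general d α δ hα S v hvb hvu hvrot
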